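/- arXiv:2409.20208 — 3 statements merged into one kernel-verified Lean document; each statement's English description precedes it below -/
import Mathlib

section
/- Let n > s_B ≥ 0, σ > 0, and μ, a, b, s_x, s_{x²} be real numbers. Set C_a = a−μ, C_b = b−μ, e_a = exp(−(a−μ)²/(2σ²)), e_b = exp(−(b−μ)²/(2σ²)), x̄ = s_x/(n−s_B), x̄² = s_{x²}/(n−s_B), and ℰ = (a·e_a − b·e_b)/(e_a − e_b). Assume e_a ≠ e_b and C_a·e_a − C_b·e_b ≠ 0. Then the equation (s_x − (n−s_B)·μ)/(e_a − e_b) = (s_{x²} − 2μ·s_x + (n−s_B)·(μ² − σ²))/(C_a·e_a − C_b·e_b) holds if and only if σ² = x̄² − μ·x̄ + (μ − x̄)·ℰ. -/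
/-- Intermediate step of Theorem 2: with `e_a = exp(-(a-μ)²/(2σ²))`,
`e_b = exp(-(b-μ)²/(2σ²))`, `C_a = a-μ`, `C_b = b-μ`, `x̄ = s_x/(n-s_B)`,
`x̄² = s_{x²}/(n-s_B)` and `ℰ = (a·e_a - b·e_b)/(e_a - e_b)`, the equation
`(s_x - (n-s_B)μ)/(e_a - e_b) = (s_{x²} - 2μs_x + (n-s_B)(μ² - σ²))/(C_a e_a - C_b e_b)`
holds iff `σ² = x̄² - μx̄ + (μ - x̄)·ℰ`. -/
theorem gaussian_variance_implicit_eq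
    (n sB σ μ a b sx sx2 : ℝ) (hn : sB < n) (hsB : 0 ≤ sB) (hσ : 0 < σ)
    (Ca Cb ea eb xbar x2bar E : ℝ)
    (hCa : Ca = a - μ) (hCb : Cb = b - μ)
    (hea : ea = Real.exp (-(a - μ) ^ 2 / (2 * σ ^ 2)))
    (heb : eb = Real.exp (-(b - μ) ^ 2 / (2 * σ ^ 2)))
    (hxbar : xbar = sx / (n - sB)) (hx2bar : x2bar = sx2 / (n - sB))
    (hE : E = (a * ea - b * eb) / (ea - eb))
    (hne : ea ≠ eb) (hne2 : Ca * ea - Cb * eb ≠ 0) :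
    (sx - (n - sB) * μ) / (ea - eb) =
      (sx2 - 2 * μ * sx + (n - sB) * (μ ^ 2 - σ ^ 2)) / (Ca * ea - Cb * eb) ↔
    σ ^ 2 = x2bar - μ * xbar + (μ - xbar) * E := by
  have hN : n - sB ≠ 0 := ne_of_gt (by linarith)
  have heab : ea - eb ≠ 0 := sub_ne_zero.mpr hne
  subst hCa hCb hxbar hx2bar hE
  rw [div_eq_div_iff heab hne2]
  constructor
  · intro h
    field_simp
    nlinarith [h, sq_nonneg (ea - eb)]
  · intro h
    field_simp at h
    nlinarith [h]
end

section
/- Let a, b, μ, x̄, x̄² be real numbers and σ > 0. Set m = ((a−μ)² − (b−μ)²)/2 and assume m ≠ 0. Define α = x̄² − μ·x̄ + (μ−x̄)·a, β = x̄² − μ·x̄ + (μ−x̄)·b, z = 1/σ², and ℰ = b + (a−b)/(1 − exp(m·z)). Then the implicit variance equation σ² = x̄² − μ·x̄ + (μ − x̄)·ℰ holds if and only if 1 − α·z = exp(m·z)·(1 − β·z). -/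
/-- Implicit form of Theorem 2: with `m = ((a-μ)² - (b-μ)²)/2 ≠ 0`,
`α = x̄² - μx̄ + (μ-x̄)a`, `β = x̄² - μx̄ + (μ-x̄)b`, `z = 1/σ²` and
`ℰ = b + (a-b)/(1 - exp(mz))`, the implicit variance equation
`σ² = x̄² - μx̄ + (μ-x̄)ℰ` holds iff `1 - αz = exp(mz)·(1 - βz)`. -/
theorem gaussian_variance_rlambert_form
    (a b μ xbar x2bar : ℝ) (σ : ℝ) (hσ : 0 < σ)
    (m α β z E : ℝ)
    (hm : m = ((a - μ) ^ 2 - (b - μ) ^ 2) / 2) (hm0 : m ≠ 0)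
    (hα : α = x2bar - μ * xbar + (μ - xbar) * a)
    (hβ : β = x2bar - μ * xbar + (μ - xbar) * b)
    (hz : z = 1 / σ ^ 2)
    (hE : E = b + (a - b) / (1 - Real.exp (m * z))) :
    σ ^ 2 = x2bar - μ * xbar + (μ - xbar) * E ↔
      1 - α * z = Real.exp (m * z) * (1 - β * z) := by

  have hσ2 : σ ^ 2 ≠ 0 := by positivity
  have hz0 : z ≠ 0 := by rw [hz]; positivity
  have hmz : m * z ≠ 0 := mul_ne_zero hm0 hz0
  have he : Real.exp (m * z) ≠ 1 := by
    intro h; exact hmz (Real.exp_injective (by rw [h, Real.exp_zero]))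
  have hD : 1 - Real.exp (m * z) ≠ 0 := sub_ne_zero.mpr (Ne.symm he)
  have hσz : σ ^ 2 = 1 / z := by rw [hz]; field_simp
  rw [hσz, hα, hβ, hE]
  rw [div_eq_iff hz0]
  constructor <;> intro h
  · field_simp at h ⊢
    nlinarith [h, sq_nonneg z]
  · field_simp [show 1 - Real.exp (z * m) ≠ 0 by rwa [mul_comm]] at h ⊢
    nlinarith [h, sq_nonneg z]
end

section
/- Let k, l, a, b be real numbers with k < l and k ≤ a < b ≤ l, and let n, s_B be real numbers with n > s_B. Consider the uniform density f_N(x) = 1/(l−k) on [k,l], with log-likelihood of the estimated-normal data ℓ(l') = (s_B − n)·log(l' − k) (up to an additive constant) and AFR mass I(l') = (b−a)/(l'−k). Then ℓ has derivative (s_B − n)/(l−k) at l, the function l' ↦ log(I(l')) has derivative −1/(l−k) at l, and consequently the density surplus gradient Ω = [derivative of ℓ at l] / [derivative of log I at l] equals n − s_B; hence, whenever s_B ≠ 0, the constrained estimate p = s_B/(n − Ω) equals 1. In particular there is no constrained solution with anomaly probability p < 1 for the uniform family. -/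
/-- Appendix proposition on the uniform family: for the uniform density on
`[k,l]` and AFR `[a,b] ⊆ [k,l]`, the log-likelihood `ℓ(l') = (s_B-n)·log(l'-k)`
has derivative `(s_B-n)/(l-k)` at `l`, the function `l' ↦ log I(l')` with
`I(l') = (b-a)/(l'-k)` has derivative `-1/(l-k)` at `l`, the density surplus
gradient `Ω` (their quotient) equals `n - s_B`, and hence the constrained
estimate `p = s_B/(n-Ω)` equals `1` whenever `s_B ≠ 0`. -/
theorem uniform_no_constrained_solution
    (k l a b n sB : ℝ) (hkl : k < l) (hka : k ≤ a) (hab : a < b) (hbl : b ≤ l)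
    (hn : sB < n) :
    HasDerivAt (fun l' : ℝ => (sB - n) * Real.log (l' - k)) ((sB - n) / (l - k)) l ∧
    HasDerivAt (fun l' : ℝ => Real.log ((b - a) / (l' - k))) (-(1 / (l - k))) l ∧
    ((sB - n) / (l - k)) / (-(1 / (l - k))) = n - sB ∧
    (sB ≠ 0 → sB / (n - ((sB - n) / (l - k)) / (-(1 / (l - k)))) = 1) := by
  have hlk : l - k ≠ 0 := sub_ne_zero.mpr (ne_of_gt hkl)
  have hba : b - a ≠ 0 := sub_ne_zero.mpr (ne_of_gt hab)
  have hsub : HasDerivAt (fun l' : ℝ => l' - k) 1 l := by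
    simpa using (hasDerivAt_id l).sub_const k
  have hlog : HasDerivAt (fun l' : ℝ => Real.log (l' - k)) (1 / (l - k)) l := by
    simpa using hsub.log hlk
  have h1 : HasDerivAt (fun l' : ℝ => (sB - n) * Real.log (l' - k))
      ((sB - n) / (l - k)) l := by
    simpa [div_eq_mul_inv, mul_comm, mul_assoc] using hlog.const_mul (sB - n)
  refine ⟨h1, ?_, ?_, ?_⟩
  · have h2 : HasDerivAt (fun l' : ℝ => Real.log (b - a) - Real.log (l' - k))
        (-(1 / (l - k))) l := by
      simpa using (hlog.const_sub (Real.log (b - a)))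
    refine h2.congr_of_eventuallyEq ?_
    have hopen : ∀ᶠ l' in nhds l, l' - k ≠ 0 := by
      have : ∀ᶠ l' in nhds l, l' ∈ Set.Ioi k :=
        (isOpen_Ioi).mem_nhds hkl
      filter_upwards [this] with x hx
      exact sub_ne_zero.mpr (ne_of_gt hx)
    filter_upwards [hopen] with x hx
    rw [Real.log_div hba hx]
  · field_simp
    ring
  · intro hs
    have : ((sB - n) / (l - k)) / (-(1 / (l - k))) = n - sB := by
      field_simp
      ring
    rw [this]
    have : n - (n - sB) = sB := by ring
    rw [this, div_self hs]
end
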